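/- arXiv:2603.21790 — 2 statements merged into one kernel-verified Lean document; each statement's English description precedes it below -/
import Mathlib

section
/- Let a, ã ∈ [0.3, 0.4], b ∈ [0.3, 0.4], and c, d, d̃ ∈ [0, 0.1]. Then: (1) □(s_{a,b}) ∩ □(p^{AC}_{ã,c}) ≠ ∅ if and only if ã = a; (2) □(t_{c,d}) ∩ □(p^{AD}_{a,d̃}) ≠ ∅ if and only if d̃ = d; (3) □(p^{AC}_{a,c}) ∩ □(z₀) ≠ ∅; (4) □(s_{a,b}) ∩ □(t_{c,d}) = ∅ and □(s_{a,b}) ∩ □(z₀) = ∅. -/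
noncomputable section

/-- The closed axis-parallel hypercube of side length 1 centered at `p ∈ ℝ⁶`. -/
def cube (p : Fin 6 → ℝ) : Set (Fin 6 → ℝ) :=
  {x | ∀ i, |x i - p i| ≤ 1 / 2}

/-- Center `s_{a,b} = (a, 1+a, b, 1+b, 0.5, 0.5)`. -/
def sC (a b : ℝ) : Fin 6 → ℝ := ![a, 1 + a, b, 1 + b, 0.5, 0.5]

/-- Center `t_{c,d} = (1+c, c, 1+c, c, 1+d, d)`. -/
def tC (c d : ℝ) : Fin 6 → ℝ := ![1 + c, c, 1 + c, c, 1 + d, d]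

/-- Center `p^{AC}_{a,c} = (1+a, a, c, 1+c, 0.5, 0.5)`. -/
def pAC (a c : ℝ) : Fin 6 → ℝ := ![1 + a, a, c, 1 + c, 0.5, 0.5]

/-- Center `p^{AD}_{a,d} = (1+a, a, 0.5, 0.5, d, 1+d)`. -/
def pAD (a d : ℝ) : Fin 6 → ℝ := ![1 + a, a, 0.5, 0.5, d, 1 + d]

/-- Center `z₀ = (0.8, 0.2, 0.8, 0.2, 0.8, 0.2)`. -/
def z₀ : Fin 6 → ℝ := ![0.8, 0.2, 0.8, 0.2, 0.8, 0.2]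

/-!
A cube of side 1 is the sup-norm ball of radius `1/2` about its center, so two such cubes meet
iff their centers are at sup-distance at most 1, i.e. iff every coordinate differs by at most 1.
Each claim is then read off single coordinates: in (1) the first two coordinates force `a ≤ a'`
and `a' ≤ a`, in (2) the last two force `d' = d`, and in (4) the second coordinates differ by
`1 + a - c > 1` and `0.8 + a > 1` respectively.
-/

open Metric

lemma cube_eq_closedBall (p : Fin 6 → ℝ) : cube p = closedBall p (1 / 2) := by
  ext x
  simp [cube, closedBall_pi, Real.dist_eq]

lemma cube_inter_nonempty_iff (p q : Fin 6 → ℝ) :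
    (cube p ∩ cube q).Nonempty ↔ ∀ i, |p i - q i| ≤ 1 := by
  rw [← Set.not_disjoint_iff_nonempty_inter, cube_eq_closedBall, cube_eq_closedBall,
    disjoint_closedBall_closedBall_iff (by norm_num) (by norm_num), not_lt, add_halves,
    dist_pi_le_iff zero_le_one]
  simp only [Real.dist_eq]

lemma cube_inter_eq_empty_iff (p q : Fin 6 → ℝ) :
    cube p ∩ cube q = ∅ ↔ ∃ i, 1 < |p i - q i| := by
  rw [← Set.not_nonempty_iff_eq_empty, cube_inter_nonempty_iff]
  push Not
  rfl

lemma cube_sC_inter_pAC_nonempty_iff {a a' b c : ℝ} (hbc : |b - c| ≤ 1) :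
    (cube (sC a b) ∩ cube (pAC a' c)).Nonempty ↔ a' = a := by
  simp only [cube_inter_nonempty_iff, Fin.forall_fin_succ, sC, pAC, Matrix.cons_val_zero,
    Matrix.cons_val_succ, IsEmpty.forall_iff, and_true]
  constructor
  · rintro ⟨h₀, h₁, -⟩
    linarith [abs_le.1 h₀, abs_le.1 h₁]
  · rintro rfl
    norm_num [hbc]

lemma cube_tC_inter_pAD_nonempty_iff {a c d d' : ℝ} (hac : |a - c| ≤ 1) (hc : |c| ≤ 1 / 2) :
    (cube (tC c d) ∩ cube (pAD a d')).Nonempty ↔ d' = d := by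
  simp only [cube_inter_nonempty_iff, Fin.forall_fin_succ, tC, pAD, Matrix.cons_val_zero,
    Matrix.cons_val_succ, IsEmpty.forall_iff, and_true]
  constructor
  · rintro ⟨-, -, -, -, h₄, h₅⟩
    linarith [abs_le.1 h₄, abs_le.1 h₅]
  · rintro rfl
    obtain ⟨hc₁, hc₂⟩ := abs_le.1 hc
    norm_num [abs_sub_comm c a, hac, abs_le]
    constructor <;> constructor <;> linarith

lemma cube_pAC_inter_z₀_nonempty {a c : ℝ} (ha : |a| ≤ 0.8) (hc : |c| ≤ 0.2) :
    (cube (pAC a c) ∩ cube z₀).Nonempty := by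
  simp only [cube_inter_nonempty_iff, Fin.forall_fin_succ, pAC, z₀, Matrix.cons_val_zero,
    Matrix.cons_val_succ, IsEmpty.forall_iff, and_true]
  obtain ⟨ha₁, ha₂⟩ := abs_le.1 ha
  obtain ⟨hc₁, hc₂⟩ := abs_le.1 hc
  norm_num [abs_le]
  refine ⟨⟨?_, ?_⟩, ⟨?_, ?_⟩, ⟨?_, ?_⟩, ⟨?_, ?_⟩⟩ <;> linarith

lemma cube_sC_inter_tC_eq_empty {a b c d : ℝ} (hca : c < a) :
    cube (sC a b) ∩ cube (tC c d) = ∅ :=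
  (cube_inter_eq_empty_iff _ _).2 ⟨1, lt_abs.2 <| .inl <| by simp [sC, tC]; linarith⟩

lemma cube_sC_inter_z₀_eq_empty {a b : ℝ} (ha : 0.2 < a) :
    cube (sC a b) ∩ cube z₀ = ∅ :=
  (cube_inter_eq_empty_iff _ _).2 ⟨1, lt_abs.2 <| .inl <| by simp [sC, z₀]; linarith⟩

theorem stmt6_general (a a' b c d d' : ℝ)
    (ha : a ∈ Set.Icc (0.3 : ℝ) 0.4)
    (hb : b ∈ Set.Icc (0.3 : ℝ) 0.4)
    (hc : c ∈ Set.Icc (0 : ℝ) 0.1) :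
    ((cube (sC a b) ∩ cube (pAC a' c)).Nonempty ↔ a' = a) ∧
    ((cube (tC c d) ∩ cube (pAD a d')).Nonempty ↔ d' = d) ∧
    (cube (pAC a c) ∩ cube z₀).Nonempty ∧
    (cube (sC a b) ∩ cube (tC c d) = ∅ ∧ cube (sC a b) ∩ cube z₀ = ∅) := by
  obtain ⟨ha₁, ha₂⟩ := ha
  obtain ⟨hb₁, hb₂⟩ := hb
  obtain ⟨hc₁, hc₂⟩ := hc
  exact ⟨cube_sC_inter_pAC_nonempty_iff (abs_le.2 ⟨by linarith, by linarith⟩),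
    cube_tC_inter_pAD_nonempty_iff (abs_le.2 ⟨by linarith, by linarith⟩)
      (abs_le.2 ⟨by linarith, by linarith⟩),
    cube_pAC_inter_z₀_nonempty (abs_le.2 ⟨by linarith, by linarith⟩)
      (abs_le.2 ⟨by linarith, by linarith⟩),
    cube_sC_inter_tC_eq_empty (by linarith), cube_sC_inter_z₀_eq_empty (by linarith)⟩

theorem stmt6 (a a' b c d d' : ℝ)
    (ha : a ∈ Set.Icc (0.3 : ℝ) 0.4) (ha' : a' ∈ Set.Icc (0.3 : ℝ) 0.4)
    (hb : b ∈ Set.Icc (0.3 : ℝ) 0.4)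
    (hc : c ∈ Set.Icc (0 : ℝ) 0.1) (hd : d ∈ Set.Icc (0 : ℝ) 0.1)
    (hd' : d' ∈ Set.Icc (0 : ℝ) 0.1) :
    ((cube (sC a b) ∩ cube (pAC a' c)).Nonempty ↔ a' = a) ∧
    ((cube (tC c d) ∩ cube (pAD a d')).Nonempty ↔ d' = d) ∧
    (cube (pAC a c) ∩ cube z₀).Nonempty ∧
    (cube (sC a b) ∩ cube (tC c d) = ∅ ∧ cube (sC a b) ∩ cube z₀ = ∅) :=
  stmt6_general a a' b c d d' ha hb hc
end
end

section
/- Let A, B, C, D be pairwise disjoint finite sets with an injective labeling v ↦ v̄ sending A ∪ B into [0.3, 0.4] and C ∪ D into [0, 0.1], and let E be a set of pairs. Form the family F of unit hypercubes in ℝ⁶: □(s_{ā,b̄}) for each (a,b) ∈ E ∩ (A×B); □(t_{c̄,d̄}) for each (c,d) ∈ E ∩ (C×D); □(p^{AC}_{ā,c̄}) for each (a,c) ∈ (A×C) \ E; □(p^{AD}_{ā,d̄}) for each (a,d) ∈ (A×D) \ E; □(p^{BC}_{b̄,c̄}) for each (b,c) ∈ (B×C) \ E; □(p^{BD}_{b̄,d̄})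 for each (b,d) ∈ (B×D) \ E; and □(z₀). If a ∈ A, b ∈ B, c ∈ C, d ∈ D form a 4-clique, i.e. (a,b), (c,d), (a,c), (a,d), (b,c), (b,d) ∈ E, then in the intersection graph of F the vertices □(s_{ā,b̄}) and □(t_{c̄,d̄}) are not adjacent and share no common neighbor, hence they are at graph distance at least 3; in particular the intersection graph has diameter greater than 2. -/
noncomputable section

/-- Center `p^{BC}_{b,c} = (c, 1+c, 1+b, b, 0.5, 0.5)`. -/
def pBC (b c : ℝ) : Fin 6 → ℝ := ![c, 1 + c, 1 + b, b, 0.5, 0.5]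

/-- Center `p^{BD}_{b,d} = (0.5, 0.5, 1+b, b, d, 1+d)`. -/
def pBD (b d : ℝ) : Fin 6 → ℝ := ![0.5, 0.5, 1 + b, b, d, 1 + d]

variable {A B C D : Type*}

/-- The family `F` of centers of the unit hypercubes in `ℝ⁶` from the construction. -/
def Fam (EAB : Set (A × B)) (ECD : Set (C × D)) (EAC : Set (A × C)) (EAD : Set (A × D))
    (EBC : Set (B × C)) (EBD : Set (B × D))
    (la : A → ℝ) (lb : B → ℝ) (lc : C → ℝ) (ld : D → ℝ) : Set (Fin 6 → ℝ) :=
  (fun e : A × B => sC (la e.1) (lb e.2)) '' EAB ∪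
  (fun e : C × D => tC (lc e.1) (ld e.2)) '' ECD ∪
  (fun e : A × C => pAC (la e.1) (lc e.2)) '' EACᶜ ∪
  (fun e : A × D => pAD (la e.1) (ld e.2)) '' EADᶜ ∪
  (fun e : B × C => pBC (lb e.1) (lc e.2)) '' EBCᶜ ∪
  (fun e : B × D => pBD (lb e.1) (ld e.2)) '' EBDᶜ ∪
  {z₀}

/-- The intersection graph of a family of unit hypercubes (given by their centers):
two distinct members are adjacent iff the corresponding hypercubes intersect. -/
def interGraph (F : Set (Fin 6 → ℝ)) : SimpleGraph ↥F :=
  SimpleGraph.fromRel fun u v => (cube u.1 ∩ cube v.1).Nonempty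

lemma edist_ge_three {V : Type*} {G : SimpleGraph V} {u v : V} (hne : u ≠ v)
    (hadj : ¬ G.Adj u v) (hcom : ∀ w, ¬ (G.Adj u w ∧ G.Adj w v)) :
    3 ≤ G.edist u v := by
  by_contra hlt
  push_neg at hlt
  obtain ⟨p, hp⟩ := SimpleGraph.exists_walk_of_edist_ne_top (ne_top_of_lt hlt)
  have hlen : p.length ≤ 2 := by
    have : (p.length : ℕ∞) < 3 := hp ▸ hlt
    have h3 : (p.length : ℕ∞) < ((3:ℕ) : ℕ∞) := by exact_mod_cast this
    have := (Nat.cast_lt (α := ℕ∞)).mp h3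
    omega
  cases p with
  | nil => exact hne rfl
  | cons h q =>
    cases q with
    | nil => exact hadj h
    | cons h' q' =>
      cases q' with
      | nil => exact hcom _ ⟨h, h'⟩
      | cons h'' q'' => simp [SimpleGraph.Walk.length_cons] at hlen

lemma inter_coord {p q : Fin 6 → ℝ} (h : (cube p ∩ cube q).Nonempty) (i : Fin 6) :
    |p i - q i| ≤ 1 := by
  obtain ⟨x, hp, hq⟩ := h
  have h1 := hp i
  have h2 := hq i
  have h3 := abs_sub_le (p i) (x i) (q i)
  rw [abs_sub_comm (p i) (x i)] at h3
  linarith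

lemma adj_coord {F : Set (Fin 6 → ℝ)} {u v : ↥F} (h : (interGraph F).Adj u v) (i : Fin 6) :
    |u.1 i - v.1 i| ≤ 1 := by
  rw [interGraph, SimpleGraph.fromRel_adj] at h
  rcases h.2 with h' | h'
  · exact inter_coord h' i
  · have := inter_coord h' i; rwa [abs_sub_comm] at this

theorem stmt7 [Fintype A] [Fintype B] [Fintype C] [Fintype D]
    (EAB : Set (A × B)) (ECD : Set (C × D)) (EAC : Set (A × C)) (EAD : Set (A × D))
    (EBC : Set (B × C)) (EBD : Set (B × D))
    (la : A → ℝ) (lb : B → ℝ) (lc : C → ℝ) (ld : D → ℝ)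
    (hinj : Function.Injective (Sum.elim la (Sum.elim lb (Sum.elim lc ld))))
    (hab : ∀ x : A ⊕ B, Sum.elim la lb x ∈ Set.Icc (0.3 : ℝ) 0.4)
    (hcd : ∀ x : C ⊕ D, Sum.elim lc ld x ∈ Set.Icc (0 : ℝ) 0.1)
    (a : A) (b : B) (c : C) (d : D)
    (h1 : (a, b) ∈ EAB) (h2 : (c, d) ∈ ECD) (h3 : (a, c) ∈ EAC)
    (h4 : (a, d) ∈ EAD) (h5 : (b, c) ∈ EBC) (h6 : (b, d) ∈ EBD) :
    (∀ u v : ↥(Fam EAB ECD EAC EAD EBC EBD la lb lc ld),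
      u.1 = sC (la a) (lb b) → v.1 = tC (lc c) (ld d) →
        ¬ (interGraph _).Adj u v ∧
        (∀ w, ¬ ((interGraph _).Adj u w ∧ (interGraph _).Adj w v)) ∧
        3 ≤ (interGraph _).edist u v) ∧
    2 < (interGraph (Fam EAB ECD EAC EAD EBC EBD la lb lc ld)).ediam := by
  have hA : ∀ x : A, la x ∈ Set.Icc (0.3:ℝ) 0.4 := fun x => hab (Sum.inl x)
  have hB : ∀ x : B, lb x ∈ Set.Icc (0.3:ℝ) 0.4 := fun x => hab (Sum.inr x)
  have hC : ∀ x : C, lc x ∈ Set.Icc (0:ℝ) 0.1 := fun x => hcd (Sum.inl x)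
  have hD : ∀ x : D, ld x ∈ Set.Icc (0:ℝ) 0.1 := fun x => hcd (Sum.inr x)
  have hinjA : ∀ x y : A, la x = la y → x = y := fun x y h => by
    have := hinj (a₁ := Sum.inl x) (a₂ := Sum.inl y) (by simpa using h)
    simpa using this
  have hinjB : ∀ x y : B, lb x = lb y → x = y := fun x y h => by
    have := hinj (a₁ := Sum.inr (Sum.inl x)) (a₂ := Sum.inr (Sum.inl y)) (by simpa using h)
    simpa using this
  have hinjC : ∀ x y : C, lc x = lc y → x = y := fun x y h => by
    have := hinj (a₁ := Sum.inr (Sum.inr (Sum.inl x))) (a₂ := Sum.inr (Sum.inr (Sum.inl y)))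
      (by simpa using h)
    simpa using this
  have hinjD : ∀ x y : D, ld x = ld y → x = y := fun x y h => by
    have := hinj (a₁ := Sum.inr (Sum.inr (Sum.inr x))) (a₂ := Sum.inr (Sum.inr (Sum.inr y)))
      (by simpa using h)
    simpa using this
  have main : ∀ u v : ↥(Fam EAB ECD EAC EAD EBC EBD la lb lc ld),
      u.1 = sC (la a) (lb b) → v.1 = tC (lc c) (ld d) →
        ¬ (interGraph _).Adj u v ∧
        (∀ w, ¬ ((interGraph _).Adj u w ∧ (interGraph _).Adj w v)) ∧
        3 ≤ (interGraph _).edist u v := by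
    intro u v hu hv
    have hnadj : ¬ (interGraph _).Adj u v := by
      intro hadj
      have h := adj_coord hadj 1
      rw [hu, hv, show sC (la a) (lb b) 1 = 1 + la a from rfl,
        show tC (lc c) (ld d) 1 = lc c from rfl, abs_le] at h
      linarith [(hA a).1, (hC c).2, h.2]
    have hcom : ∀ w, ¬ ((interGraph _).Adj u w ∧ (interGraph _).Adj w v) := by
      rintro w ⟨huw, hwv⟩
      have hwmem := w.2
      simp only [Fam, Set.mem_union, Set.mem_image, Set.mem_singleton_iff,
        Set.mem_compl_iff] at hwmem
      rcases hwmem with ((((((⟨⟨x, y⟩, he, hwe⟩ | ⟨⟨x, y⟩, he, hwe⟩) | ⟨⟨x, y⟩, he, hwe⟩) |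
        ⟨⟨x, y⟩, he, hwe⟩) | ⟨⟨x, y⟩, he, hwe⟩) | ⟨⟨x, y⟩, he, hwe⟩) | hwe)
      · -- w = sC (la x) (lb y)
        have h := adj_coord hwv 1
        rw [← hwe, hv, show sC (la x) (lb y) 1 = 1 + la x from rfl,
          show tC (lc c) (ld d) 1 = lc c from rfl, abs_le] at h
        linarith [(hA x).1, (hC c).2, h.2]
      · -- w = tC (lc x) (ld y)
        have h := adj_coord huw 1
        rw [hu, ← hwe, show sC (la a) (lb b) 1 = 1 + la a from rfl,
          show tC (lc x) (ld y) 1 = lc x from rfl, abs_le] at h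
        linarith [(hA a).1, (hC x).2, h.2]
      · -- w = pAC (la x) (lc y), (x,y) ∉ EAC
        have e0 := adj_coord huw 0
        have e1 := adj_coord huw 1
        rw [hu, ← hwe, show sC (la a) (lb b) 0 = la a from rfl,
          show pAC (la x) (lc y) 0 = 1 + la x from rfl, abs_le] at e0
        rw [hu, ← hwe, show sC (la a) (lb b) 1 = 1 + la a from rfl,
          show pAC (la x) (lc y) 1 = la x from rfl, abs_le] at e1
        have hx : x = a := hinjA x a (le_antisymm (by linarith [e0.1]) (by linarith [e1.2]))
        have e2 := adj_coord hwv 2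
        have e3 := adj_coord hwv 3
        rw [← hwe, hv, show pAC (la x) (lc y) 2 = lc y from rfl,
          show tC (lc c) (ld d) 2 = 1 + lc c from rfl, abs_le] at e2
        rw [← hwe, hv, show pAC (la x) (lc y) 3 = 1 + lc y from rfl,
          show tC (lc c) (ld d) 3 = lc c from rfl, abs_le] at e3
        have hy : y = c := hinjC y c (le_antisymm (by linarith [e3.2]) (by linarith [e2.1]))
        exact he (by rw [hx, hy]; exact h3)
      · -- w = pAD (la x) (ld y), (x,y) ∉ EAD
        have e0 := adj_coord huw 0
        have e1 := adj_coord huw 1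
        rw [hu, ← hwe, show sC (la a) (lb b) 0 = la a from rfl,
          show pAD (la x) (ld y) 0 = 1 + la x from rfl, abs_le] at e0
        rw [hu, ← hwe, show sC (la a) (lb b) 1 = 1 + la a from rfl,
          show pAD (la x) (ld y) 1 = la x from rfl, abs_le] at e1
        have hx : x = a := hinjA x a (le_antisymm (by linarith [e0.1]) (by linarith [e1.2]))
        have e4 := adj_coord hwv 4
        have e5 := adj_coord hwv 5
        rw [← hwe, hv, show pAD (la x) (ld y) 4 = ld y from rfl,
          show tC (lc c) (ld d) 4 = 1 + ld d from rfl, abs_le] at e4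
        rw [← hwe, hv, show pAD (la x) (ld y) 5 = 1 + ld y from rfl,
          show tC (lc c) (ld d) 5 = ld d from rfl, abs_le] at e5
        have hy : y = d := hinjD y d (le_antisymm (by linarith [e5.2]) (by linarith [e4.1]))
        exact he (by rw [hx, hy]; exact h4)
      · -- w = pBC (lb x) (lc y), (x,y) ∉ EBC
        have e2 := adj_coord huw 2
        have e3 := adj_coord huw 3
        rw [hu, ← hwe, show sC (la a) (lb b) 2 = lb b from rfl,
          show pBC (lb x) (lc y) 2 = 1 + lb x from rfl, abs_le] at e2
        rw [hu, ← hwe, show sC (la a) (lb b) 3 = 1 + lb b from rfl,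
          show pBC (lb x) (lc y) 3 = lb x from rfl, abs_le] at e3
        have hx : x = b := hinjB x b (le_antisymm (by linarith [e2.1]) (by linarith [e3.2]))
        have e0 := adj_coord hwv 0
        have e1 := adj_coord hwv 1
        rw [← hwe, hv, show pBC (lb x) (lc y) 0 = lc y from rfl,
          show tC (lc c) (ld d) 0 = 1 + lc c from rfl, abs_le] at e0
        rw [← hwe, hv, show pBC (lb x) (lc y) 1 = 1 + lc y from rfl,
          show tC (lc c) (ld d) 1 = lc c from rfl, abs_le] at e1
        have hy : y = c := hinjC y c (le_antisymm (by linarith [e1.2]) (by linarith [e0.1]))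
        exact he (by rw [hx, hy]; exact h5)
      · -- w = pBD (lb x) (ld y), (x,y) ∉ EBD
        have e2 := adj_coord huw 2
        have e3 := adj_coord huw 3
        rw [hu, ← hwe, show sC (la a) (lb b) 2 = lb b from rfl,
          show pBD (lb x) (ld y) 2 = 1 + lb x from rfl, abs_le] at e2
        rw [hu, ← hwe, show sC (la a) (lb b) 3 = 1 + lb b from rfl,
          show pBD (lb x) (ld y) 3 = lb x from rfl, abs_le] at e3
        have hx : x = b := hinjB x b (le_antisymm (by linarith [e2.1]) (by linarith [e3.2]))
        have e4 := adj_coord hwv 4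
        have e5 := adj_coord hwv 5
        rw [← hwe, hv, show pBD (lb x) (ld y) 4 = ld y from rfl,
          show tC (lc c) (ld d) 4 = 1 + ld d from rfl, abs_le] at e4
        rw [← hwe, hv, show pBD (lb x) (ld y) 5 = 1 + ld y from rfl,
          show tC (lc c) (ld d) 5 = ld d from rfl, abs_le] at e5
        have hy : y = d := hinjD y d (le_antisymm (by linarith [e5.2]) (by linarith [e4.1]))
        exact he (by rw [hx, hy]; exact h6)
      · -- w = z₀
        have h := adj_coord huw 1
        rw [hu, hwe, show sC (la a) (lb b) 1 = 1 + la a from rfl,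
          show z₀ 1 = 0.2 from rfl, abs_le] at h
        linarith [(hA a).1, h.2]
    have hne : u ≠ v := by
      intro h
      have hh : sC (la a) (lb b) = tC (lc c) (ld d) := by rw [← hu, ← hv, h]
      have := congrFun hh 1
      rw [show sC (la a) (lb b) 1 = 1 + la a from rfl,
        show tC (lc c) (ld d) 1 = lc c from rfl] at this
      linarith [(hA a).1, (hC c).2]
    exact ⟨hnadj, hcom, edist_ge_three hne hnadj hcom⟩
  refine ⟨main, ?_⟩
  have hu0 : sC (la a) (lb b) ∈ Fam EAB ECD EAC EAD EBC EBD la lb lc ld := by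
    simp only [Fam, Set.mem_union, Set.mem_image]
    exact Or.inl (Or.inl (Or.inl (Or.inl (Or.inl (Or.inl ⟨(a, b), h1, rfl⟩)))))
  have hv0 : tC (lc c) (ld d) ∈ Fam EAB ECD EAC EAD EBC EBD la lb lc ld := by
    simp only [Fam, Set.mem_union, Set.mem_image]
    exact Or.inl (Or.inl (Or.inl (Or.inl (Or.inl (Or.inr ⟨(c, d), h2, rfl⟩)))))
  have h := (main ⟨_, hu0⟩ ⟨_, hv0⟩ rfl rfl).2.2
  calc (2 : ℕ∞) < 3 := by norm_num
    _ ≤ _ := h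
    _ ≤ _ := SimpleGraph.edist_le_ediam
end
end
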